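/- For every nonnegative integer r, every n ∈ {2, …, N} and every f ∈ ℂ^N, the best approximation error satisfies E_n(f) ≤ (2 sin(1/2))^{−r} · Σ_{k=n+1}^{N} ω_r(f, λ_k^{−1/2}) (the sum being empty, hence zero, for n = N). -/

import Mathlib

open Matrix

noncomputable section

/-- Euclidean (2-)norm on `ℂ^N`. -/
def cnorm2 {N : ℕ} (f : Fin N → ℂ) : ℝ := Real.sqrt (∑ i, ‖f i‖ ^ 2)

/-- The spectral operator `Σ_j c_j u_j u_j^*`. -/
def specOp {N : ℕ} (u : Fin N → Fin N → ℂ) (c : Fin N → ℂ) : Matrix (Fin N) (Fin N) ℂ :=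
  ∑ j, c j • Matrix.vecMulVec (u j) (star (u j))

/-- The graph translation operator `T_s = Σ_j e^{i s √λ_j} u_j u_j^*`. -/
def Tmat {N : ℕ} (u : Fin N → Fin N → ℂ) (lam : Fin N → ℝ) (s : ℝ) :
    Matrix (Fin N) (Fin N) ℂ :=
  specOp u (fun j => Complex.exp (Complex.I * (s : ℂ) * (Real.sqrt (lam j) : ℂ)))

/-- The `r`-th modulus of smoothness `ω_r(f,t) = sup_{|s| ≤ t} ‖(T_s - I)^r f‖₂`. -/
def omegaMod {N : ℕ} (u : Fin N → Fin N → ℂ) (lam : Fin N → ℝ) (r : ℕ) (f : Fin N → ℂ)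
    (t : ℝ) : ℝ :=
  ⨆ s : {s : ℝ // |s| ≤ t}, cnorm2 (((Tmat u lam s.1 - 1) ^ r).mulVec f)

/-- The Paley–Wiener space `PW_{λ_n} = span(u_1, …, u_n)`. -/
def PWspace {N : ℕ} (u : Fin N → Fin N → ℂ) (n : ℕ) : Submodule ℂ (Fin N → ℂ) :=
  Submodule.span ℂ {g | ∃ j : Fin N, (j : ℕ) < n ∧ g = u j}

/-- The best approximation error `E_n(f) = min_{g ∈ PW_{λ_n}} ‖f - g‖₂`. -/
def bestErr {N : ℕ} (u : Fin N → Fin N → ℂ) (n : ℕ) (f : Fin N → ℂ) : ℝ :=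
  sInf {y : ℝ | ∃ g ∈ PWspace u n, y = cnorm2 (f - g)}

/-!
Write `a_j = ⟨u_j, f⟩`. Truncating the eigen-expansion of `f` after the first `n` terms gives
`E_n(f) ≤ Σ_{j ≥ n} |a_j|`. Since `T_s` acts on `u_j` by `e^{i s √λ_j}`, the `u_j`-coefficient of
`(T_s - I)^r f` is `(e^{i s √λ_j} - 1)^r a_j`. For `j ≥ n ≥ 2` we have `λ_j > 0`, and at
`s = λ_j^{-1/2}` this coefficient has modulus `(2 sin(1/2))^r |a_j|` and is bounded by
`‖(T_s - I)^r f‖ ≤ ω_r(f, λ_j^{-1/2})`.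
-/

open scoped InnerProductSpace

theorem Matrix.vecMul_pow_of_vecMul_eq_smul {R n : Type*} [CommSemiring R] [Fintype n]
    [DecidableEq n] {A : Matrix n n R} {x : n → R} {μ : R} (h : x ᵥ* A = μ • x) (r : ℕ) :
    x ᵥ* A ^ r = μ ^ r • x := by
  induction r with
  | zero => simp
  | succ r ih => rw [pow_succ, ← vecMul_vecMul, ih, smul_vecMul, h, smul_smul, pow_succ]

section

variable {N : ℕ} {u : Fin N → Fin N → ℂ}

theorem cnorm2_eq_norm_toLp (v : Fin N → ℂ) : cnorm2 v = ‖WithLp.toLp 2 v‖ := by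
  rw [EuclideanSpace.norm_eq]
  rfl

theorem star_dotProduct_eq_inner (x y : Fin N → ℂ) :
    star x ⬝ᵥ y = ⟪WithLp.toLp 2 x, WithLp.toLp 2 y⟫_ℂ := by
  rw [EuclideanSpace.inner_toLp_toLp, dotProduct_comm]

theorem orthonormal_toLp_of_star_dotProduct
    (hu : ∀ i j, star (u i) ⬝ᵥ u j = if i = j then 1 else 0) :
    Orthonormal ℂ fun j => WithLp.toLp 2 (u j) :=
  orthonormal_iff_ite.mpr fun i j => by rw [← star_dotProduct_eq_inner, hu]

theorem sum_star_dotProduct_smul (hu : Orthonormal ℂ fun j => WithLp.toLp 2 (u j))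
    (v : Fin N → ℂ) : ∑ j, (star (u j) ⬝ᵥ v) • u j = v := by
  have hspan := hu.linearIndependent.span_eq_top_of_card_eq_finrank'
    (by rw [Fintype.card_fin, finrank_euclideanSpace_fin])
  have := (OrthonormalBasis.mk hu hspan.ge).sum_repr' (WithLp.toLp 2 v)
  simp only [OrthonormalBasis.coe_mk, ← star_dotProduct_eq_inner, ← WithLp.toLp_smul,
    ← WithLp.toLp_sum] at this
  exact WithLp.toLp_injective 2 this

theorem cnorm2_sum_smul_le (hu : Orthonormal ℂ fun j => WithLp.toLp 2 (u j)) (a : Fin N → ℂ)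
    (S : Finset (Fin N)) : cnorm2 (∑ j ∈ S, a j • u j) ≤ ∑ j ∈ S, ‖a j‖ := by
  rw [cnorm2_eq_norm_toLp, WithLp.toLp_sum]
  refine (norm_sum_le _ _).trans (Finset.sum_le_sum fun j _ => ?_)
  rw [WithLp.toLp_smul, norm_smul, hu.1 j, mul_one]

theorem norm_star_dotProduct_le_cnorm2 (hu : Orthonormal ℂ fun j => WithLp.toLp 2 (u j))
    (j : Fin N) (w : Fin N → ℂ) : ‖star (u j) ⬝ᵥ w‖ ≤ cnorm2 w := by
  rw [star_dotProduct_eq_inner, cnorm2_eq_norm_toLp]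
  simpa [hu.1 j] using norm_inner_le_norm (𝕜 := ℂ) (WithLp.toLp 2 (u j)) (WithLp.toLp 2 w)

theorem bestErr_le_cnorm2_sub {n : ℕ} {f g : Fin N → ℂ} (hg : g ∈ PWspace u n) :
    bestErr u n f ≤ cnorm2 (f - g) :=
  csInf_le ⟨0, by rintro y ⟨g', -, rfl⟩; exact Real.sqrt_nonneg _⟩ ⟨g, hg, rfl⟩

theorem bestErr_le_sum_norm_star_dotProduct (hu : Orthonormal ℂ fun j => WithLp.toLp 2 (u j))
    (n : ℕ) (f : Fin N → ℂ) :
    bestErr u n f ≤ ∑ j ∈ Finset.univ.filter (fun j : Fin N => n ≤ (j : ℕ)),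
      ‖star (u j) ⬝ᵥ f‖ := by
  set a : Fin N → ℂ := fun j => star (u j) ⬝ᵥ f
  set g := ∑ j ∈ Finset.univ.filter (fun j : Fin N => ¬ n ≤ (j : ℕ)), a j • u j
  have hg : g ∈ PWspace u n := Submodule.sum_mem _ fun j hj => Submodule.smul_mem _ _
    (Submodule.subset_span ⟨j, not_le.mp (Finset.mem_filter.mp hj).2, rfl⟩)
  have hfg : f - g = ∑ j ∈ Finset.univ.filter (fun j : Fin N => n ≤ (j : ℕ)), a j • u j := by
    rw [sub_eq_iff_eq_add, Finset.sum_filter_add_sum_filter_not, sum_star_dotProduct_smul hu]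
  calc bestErr u n f ≤ cnorm2 (f - g) := bestErr_le_cnorm2_sub hg
    _ ≤ _ := hfg ▸ cnorm2_sum_smul_le hu a _

theorem star_vecMul_specOp (hu : Orthonormal ℂ fun j => WithLp.toLp 2 (u j)) (c : Fin N → ℂ)
    (j : Fin N) : star (u j) ᵥ* specOp u c = c j • star (u j) := by
  simp only [specOp, vecMul_sum, vecMul_smul, vecMul_vecMulVec, star_dotProduct_eq_inner,
    orthonormal_iff_ite.mp hu, ite_smul, one_smul, zero_smul, smul_ite, smul_zero,
    Finset.sum_ite_eq, Finset.mem_univ, if_true]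

theorem star_dotProduct_Tmat_sub_one_pow_mulVec (hu : Orthonormal ℂ fun j => WithLp.toLp 2 (u j))
    (lam : Fin N → ℝ) (s : ℝ) (r : ℕ) (f : Fin N → ℂ) (j : Fin N) :
    star (u j) ⬝ᵥ (Tmat u lam s - 1) ^ r *ᵥ f =
      (Complex.exp (Complex.I * s * Real.sqrt (lam j)) - 1) ^ r * (star (u j) ⬝ᵥ f) := by
  have hT : star (u j) ᵥ* (Tmat u lam s - 1) =
      (Complex.exp (Complex.I * s * Real.sqrt (lam j)) - 1) • star (u j) := by
    rw [vecMul_sub, vecMul_one, Tmat, star_vecMul_specOp hu, sub_smul, one_smul]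
  rw [dotProduct_mulVec, vecMul_pow_of_vecMul_eq_smul hT, smul_dotProduct, smul_eq_mul]

theorem bddAbove_range_cnorm2_Tmat_sub_one_pow_mulVec
    (hu : Orthonormal ℂ fun j => WithLp.toLp 2 (u j)) (lam : Fin N → ℝ) (r : ℕ)
    (f : Fin N → ℂ) (t : ℝ) :
    BddAbove (Set.range fun s : {s : ℝ // |s| ≤ t} =>
      cnorm2 (((Tmat u lam s.1 - 1) ^ r).mulVec f)) := by
  refine ⟨∑ j, 2 ^ r * ‖star (u j) ⬝ᵥ f‖, ?_⟩
  rintro _ ⟨s, rfl⟩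
  dsimp only
  rw [← sum_star_dotProduct_smul hu ((Tmat u lam s.1 - 1) ^ r *ᵥ f)]
  refine (cnorm2_sum_smul_le hu _ _).trans (Finset.sum_le_sum fun j _ => ?_)
  rw [star_dotProduct_Tmat_sub_one_pow_mulVec hu, norm_mul, norm_pow]
  have hexp : ‖Complex.exp (Complex.I * s.1 * Real.sqrt (lam j)) - 1‖ ≤ 2 := by
    rw [mul_assoc, ← Complex.ofReal_mul, Complex.norm_exp_I_mul_ofReal_sub_one, norm_mul,
      Real.norm_two, Real.norm_eq_abs]
    exact mul_le_of_le_one_right zero_le_two (Real.abs_sin_le_one _)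
  gcongr

theorem norm_star_dotProduct_Tmat_le_omegaMod (hu : Orthonormal ℂ fun j => WithLp.toLp 2 (u j))
    (lam : Fin N → ℝ) (r : ℕ) (f : Fin N → ℂ) (j : Fin N) {s t : ℝ} (hst : |s| ≤ t) :
    ‖(Complex.exp (Complex.I * s * Real.sqrt (lam j)) - 1) ^ r * (star (u j) ⬝ᵥ f)‖ ≤
      omegaMod u lam r f t := by
  rw [← star_dotProduct_Tmat_sub_one_pow_mulVec hu]
  exact (norm_star_dotProduct_le_cnorm2 hu j _).trans
    (le_ciSup (bddAbove_range_cnorm2_Tmat_sub_one_pow_mulVec hu lam r f t) ⟨s, hst⟩)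

theorem norm_star_dotProduct_le_omegaMod (hu : Orthonormal ℂ fun j => WithLp.toLp 2 (u j))
    (lam : Fin N → ℝ) (r : ℕ) (f : Fin N → ℂ) {j : Fin N} (hj : 0 < lam j) :
    ‖star (u j) ⬝ᵥ f‖ ≤
      (2 * Real.sin (1 / 2))⁻¹ ^ r * omegaMod u lam r f (lam j ^ (-(1 : ℝ) / 2)) := by
  set t := lam j ^ (-(1 : ℝ) / 2)
  have ht : 0 < t := Real.rpow_pos_of_pos hj _
  have hscale : t * Real.sqrt (lam j) = 1 := by
    rw [Real.sqrt_eq_rpow, ← Real.rpow_add hj]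
    norm_num
  have hsin : 0 < 2 * Real.sin (1 / 2) := mul_pos two_pos <|
    Real.sin_pos_of_pos_of_lt_pi (by norm_num) (by linarith [Real.pi_gt_three])
  have := norm_star_dotProduct_Tmat_le_omegaMod hu lam r f j (abs_of_pos ht).le
  rw [mul_assoc, ← Complex.ofReal_mul, hscale, norm_mul, norm_pow,
    Complex.norm_exp_I_mul_ofReal_sub_one, Real.norm_of_nonneg hsin.le] at this
  rwa [inv_pow, le_inv_mul_iff₀ (pow_pos hsin r)]

end

/-- For every nonnegative integer `r`, every `n ∈ {2, …, N}` and every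
`f ∈ ℂ^N`, `E_n(f) ≤ (2 sin(1/2))^{-r} · Σ_{k=n+1}^{N} ω_r(f, λ_k^{-1/2})`
(the sum over `k ∈ {n+1, …, N}` is written as a sum over the indices `j : Fin N`
with `n ≤ j`, i.e. `k = j + 1`; it is empty for `n = N`). -/
theorem stmt4
    (N : ℕ) (hN : 2 ≤ N)
    (u : Fin N → Fin N → ℂ)
    (hu : ∀ i j, star (u i) ⬝ᵥ u j = if i = j then 1 else 0)
    (lam : Fin N → ℝ) (hmono : Monotone lam)
    (hlam1 : 0 < lam ⟨1, by omega⟩)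
    (r : ℕ) (n : ℕ) (hn2 : 2 ≤ n) (f : Fin N → ℂ) :
    bestErr u n f ≤
      ((2 * Real.sin (1 / 2))⁻¹) ^ r *
        ∑ j ∈ Finset.univ.filter (fun j : Fin N => n ≤ (j : ℕ)),
          omegaMod u lam r f (lam j ^ (-(1 : ℝ) / 2)) := by
  have hu' := orthonormal_toLp_of_star_dotProduct hu
  have hlam_pos {j : Fin N} (hj : n ≤ (j : ℕ)) : 0 < lam j :=
    hlam1.trans_le (hmono (Fin.le_iff_val_le_val.mpr (by dsimp only; omega)))
  calc bestErr u n f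
      ≤ ∑ j ∈ Finset.univ.filter (fun j : Fin N => n ≤ (j : ℕ)), ‖star (u j) ⬝ᵥ f‖ :=
        bestErr_le_sum_norm_star_dotProduct hu' n f
    _ ≤ ∑ j ∈ Finset.univ.filter (fun j : Fin N => n ≤ (j : ℕ)),
          (2 * Real.sin (1 / 2))⁻¹ ^ r * omegaMod u lam r f (lam j ^ (-(1 : ℝ) / 2)) :=
        Finset.sum_le_sum fun j hj =>
          norm_star_dotProduct_le_omegaMod hu' lam r f (hlam_pos (Finset.mem_filter.mp hj).2)
    _ = _ := (Finset.mul_sum _ _ _).symm
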